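/- arXiv:1005.3142 — 4 statements merged into one kernel-verified Lean document; each statement's English description precedes it below -/
import Mathlib

section
/- Let (X,≤) be a partially ordered set with a metric d making (X,d) a complete metric space. Let F: X×X → X be continuous and have the mixed monotone property. Suppose there exist α, β > 0 with α + β < 1 such that d(F(x,y),F(u,v)) ≤ α·M((x,y),(u,v)) + (β/2)[d(x,u)+d(y,v)] for all (x,y),(u,v) ∈ X×X with x ≥ u and y ≤ v, where M((x,y),(u,v)) = min{ d(x,F(x,y))·(2+d(u,F(u,v))+d(v,F(v,u)))/(2+d(x,u)+d(y,v)), d(u,F(u,v))·(2+d(x,F(x,y))+d(y,F(y,x)))/(2+d(x,u)+d(y,v)) }. If there exist x₀, y₀ ∈ X with x₀ ≤ F(x₀,y₀) and y₀ ≥ F(y₀,x₀), then F has a coupled fixed point: there exists (x,y) ∈ X×X with F(x,y) = x and F(y,x) = y. -/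
/-!
The pairs `(x, y)` with `x ≤ F x y` and `F y x ≤ y` are mapped to themselves by
`G (x, y) = (F x y, F y x)`, by mixed monotonicity. For such a pair, the contractive condition
applied to `(G p, p)` has the rational term `M` collapse to `dist (G p).1 (G (G p)).1`
(and symmetrically for the second coordinate), so that `dist (G p) (G (G p)) ≤ k * dist p (G p)`
in the max metric on `X × X`, with `k = β / (1 - α) < 1`. The orbit of `(x₀, y₀)` is then Cauchy
and its limit is a fixed point of `G`, i.e. a coupled fixed point of `F`.
-/

open Filter Topology

/-- Mixed monotone property: `x ↦ F x y` nondecreasing, `y ↦ F x y` nonincreasing. -/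
def MixedMonotone {X : Type*} [PartialOrder X] (F : X → X → X) : Prop :=
  (∀ y, Monotone fun x => F x y) ∧ (∀ x, Antitone fun y => F x y)

/-- The rational expression `M((x,y),(u,v))` from the paper. -/
noncomputable def Mexpr {X : Type*} [MetricSpace X] (F : X → X → X) (x y u v : X) : ℝ :=
  min (dist x (F x y) * (2 + dist u (F u v) + dist v (F v u)) / (2 + dist x u + dist y v))
      (dist u (F u v) * (2 + dist x (F x y) + dist y (F y x)) / (2 + dist x u + dist y v))

open Function Set

theorem exists_isFixedPt_of_dist_map_map_le {E : Type*} [MetricSpace E] [CompleteSpace E]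
    {f : E → E} (hf : Continuous f) {S : Set E} (hS : MapsTo f S S) {k : ℝ} (hk₀ : 0 ≤ k)
    (hk : k < 1) (hfS : ∀ p ∈ S, dist (f p) (f (f p)) ≤ k * dist p (f p)) {p : E} (hp : p ∈ S) :
    ∃ q, IsFixedPt f q := by
  have horbit : ∀ n, dist (f^[n] p) (f^[n + 1] p) ≤ dist p (f p) * k ^ n := by
    intro n
    induction n with
    | zero => simp
    | succ n ih =>
      calc dist (f^[n + 1] p) (f^[n + 1 + 1] p)
          = dist (f (f^[n] p)) (f (f (f^[n] p))) := by simp only [iterate_succ_apply']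
        _ ≤ k * dist (f^[n] p) (f^[n + 1] p) := by
          rw [iterate_succ_apply']; exact hfS _ (hS.iterate n hp)
        _ ≤ k * (dist p (f p) * k ^ n) := by gcongr
        _ = dist p (f p) * k ^ (n + 1) := by ring
  obtain ⟨q, hq⟩ := cauchySeq_tendsto_of_complete (cauchySeq_of_le_geometric k _ hk horbit)
  exact ⟨q, isFixedPt_of_tendsto_iterate hq hf.continuousAt⟩

section Coupled

variable {X : Type*}

def coupledMap (F : X → X → X) (p : X × X) : X × X :=
  (F p.1 p.2, F p.2 p.1)

theorem continuous_coupledMap [TopologicalSpace X] {F : X → X → X}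
    (hF : Continuous fun p : X × X => F p.1 p.2) : Continuous (coupledMap F) :=
  hF.prodMk (hF.comp continuous_swap)

def coupledLowerUpperPairs [Preorder X] (F : X → X → X) : Set (X × X) :=
  {p | p.1 ≤ F p.1 p.2 ∧ F p.2 p.1 ≤ p.2}

theorem MixedMonotone.mapsTo_coupledMap [PartialOrder X] {F : X → X → X} (hF : MixedMonotone F) :
    MapsTo (coupledMap F) (coupledLowerUpperPairs F) (coupledLowerUpperPairs F) := by
  rintro ⟨x, y⟩ ⟨hx, hy⟩
  exact ⟨(hF.1 y hx).trans (hF.2 _ hy), (hF.1 _ hy).trans (hF.2 y hx)⟩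

variable [MetricSpace X] {F : X → X → X}

theorem Mexpr_coupledMap_fst_le (x y : X) :
    Mexpr F (F x y) (F y x) x y ≤ dist (F x y) (F (F x y) (F y x)) := by
  refine (min_le_left _ _).trans_eq ?_
  rw [dist_comm (F x y) x, dist_comm (F y x) y, mul_div_assoc, div_self (by positivity), mul_one]

theorem Mexpr_coupledMap_snd_le (x y : X) :
    Mexpr F y x (F y x) (F x y) ≤ dist (F y x) (F (F y x) (F x y)) := by
  refine (min_le_right _ _).trans_eq ?_
  rw [mul_div_assoc, div_self (by positivity), mul_one]

theorem dist_coupledMap_coupledMap_le [PartialOrder X] {α β : ℝ} (hα : 0 ≤ α) (hβ : 0 ≤ β)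
    (hα₁ : α < 1)
    (hcontr : ∀ x y u v : X, u ≤ x → y ≤ v →
      dist (F x y) (F u v) ≤ α * Mexpr F x y u v + β / 2 * (dist x u + dist y v))
    {p : X × X} (hp : p ∈ coupledLowerUpperPairs F) :
    dist (coupledMap F p) (coupledMap F (coupledMap F p)) ≤
      β / (1 - α) * dist p (coupledMap F p) := by
  obtain ⟨⟨x, y⟩, hx, hy⟩ := p, hp
  have hfst : (1 - α) * dist (F x y) (F (F x y) (F y x)) ≤
      β / 2 * (dist x (F x y) + dist y (F y x)) := by
    have h := hcontr (F x y) (F y x) x y hx hy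
    rw [dist_comm (F (F x y) (F y x)), dist_comm (F x y) x, dist_comm (F y x) y] at h
    linarith [mul_le_mul_of_nonneg_left (Mexpr_coupledMap_fst_le (F := F) x y) hα]
  have hsnd : (1 - α) * dist (F y x) (F (F y x) (F x y)) ≤
      β / 2 * (dist x (F x y) + dist y (F y x)) := by
    have h := hcontr y x (F y x) (F x y) hy hx
    rw [add_comm (dist y _)] at h
    linarith [mul_le_mul_of_nonneg_left (Mexpr_coupledMap_snd_le (F := F) x y) hα]
  have hd : β / 2 * (dist x (F x y) + dist y (F y x)) ≤
      β * max (dist x (F x y)) (dist y (F y x)) := by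
    nlinarith [le_max_left (dist x (F x y)) (dist y (F y x)),
      le_max_right (dist x (F x y)) (dist y (F y x))]
  change max (dist (F x y) (F (F x y) (F y x))) (dist (F y x) (F (F y x) (F x y))) ≤
    β / (1 - α) * max (dist x (F x y)) (dist y (F y x))
  rw [div_mul_eq_mul_div]
  refine max_le ?_ ?_ <;> rw [le_div_iff₀ (by linarith), mul_comm] <;> linarith

end Coupled

theorem coupled_fixed_point_exists
    {X : Type*} [MetricSpace X] [PartialOrder X] [CompleteSpace X]
    (F : X → X → X) (hFc : Continuous fun p : X × X => F p.1 p.2)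
    (hmm : MixedMonotone F) (α β : ℝ) (hα : 0 < α) (hβ : 0 < β) (hαβ : α + β < 1)
    (hcontr : ∀ x y u v : X, u ≤ x → y ≤ v →
      dist (F x y) (F u v) ≤ α * Mexpr F x y u v + β / 2 * (dist x u + dist y v))
    (x₀ y₀ : X) (hx₀ : x₀ ≤ F x₀ y₀) (hy₀ : F y₀ x₀ ≤ y₀) :
    ∃ x y : X, F x y = x ∧ F y x = y := by
  have hα₁ : α < 1 := by linarith
  have hk : β / (1 - α) < 1 := by rw [div_lt_one (by linarith)]; linarith
  obtain ⟨⟨x, y⟩, hfix⟩ := exists_isFixedPt_of_dist_map_map_le (continuous_coupledMap hFc)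
    hmm.mapsTo_coupledMap (div_nonneg hβ.le (by linarith)) hk
    (fun p hp => dist_coupledMap_coupledMap_le hα.le hβ.le hα₁ hcontr hp)
    (p := (x₀, y₀)) ⟨hx₀, hy₀⟩
  exact ⟨x, y, Prod.ext_iff.mp hfix⟩
end

section
/- Under the hypotheses of the coupled fixed point existence theorem, if additionally the starting points x₀ and y₀ are comparable (x₀ ≤ y₀ or y₀ ≤ x₀), then the coupled fixed point (x,y) obtained as the limit of the iterates satisfies x = y. -/
open Filter Topology

/-! If `x₀ ≤ y₀`, mixed monotonicity keeps `xₙ ≤ yₙ` for all `n`, so the contractive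
condition applies to the pair `(yₙ, xₙ), (xₙ, yₙ)` and gives
`d(xₙ₊₁, yₙ₊₁) ≤ α M((yₙ,xₙ),(xₙ,yₙ)) + β d(xₙ, yₙ)`. Since `M` is bounded by
`d(yₙ, yₙ₊₁)` times a bounded factor and consecutive iterates of a convergent sequence
approach each other, `M → 0`; in the limit `d(x, y) ≤ β d(x, y)` with `β < 1`. -/

section CoupledIterates

variable {X : Type*} {F : X → X → X} {xs ys : ℕ → X}

theorem MixedMonotone.coupled_iterate_le [PartialOrder X] (hF : MixedMonotone F)
    (hxs : ∀ n, xs (n + 1) = F (xs n) (ys n)) (hys : ∀ n, ys (n + 1) = F (ys n) (xs n))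
    (h₀ : xs 0 ≤ ys 0) (n : ℕ) : xs n ≤ ys n := by
  induction n with
  | zero => exact h₀
  | succ n ih =>
    rw [hxs n, hys n]
    exact (hF.1 (ys n) ih).trans (hF.2 (ys n) ih)

variable [MetricSpace X]

theorem Mexpr_nonneg (F : X → X → X) (x y u v : X) : 0 ≤ Mexpr F x y u v :=
  le_min (by positivity) (by positivity)

theorem Mexpr_le (F : X → X → X) (x y u v : X) :
    Mexpr F x y u v ≤ dist x (F x y) * (2 + dist u (F u v) + dist v (F v u)) / 2 := by
  refine (min_le_left _ _).trans (div_le_div_of_nonneg_left (by positivity) two_pos ?_)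
  linarith [dist_nonneg (x := x) (y := u), dist_nonneg (x := y) (y := v)]

theorem tendsto_dist_succ_zero {x : X} (hx : Tendsto xs atTop (𝓝 x)) :
    Tendsto (fun n => dist (xs n) (xs (n + 1))) atTop (𝓝 0) := by
  simpa using hx.dist (hx.comp (tendsto_add_atTop_nat 1))

theorem tendsto_Mexpr_coupled_iterate_zero
    (hxs : ∀ n, xs (n + 1) = F (xs n) (ys n)) (hys : ∀ n, ys (n + 1) = F (ys n) (xs n))
    {x y : X} (hx : Tendsto xs atTop (𝓝 x)) (hy : Tendsto ys atTop (𝓝 y)) :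
    Tendsto (fun n => Mexpr F (ys n) (xs n) (xs n) (ys n)) atTop (𝓝 0) := by
  have ha := tendsto_dist_succ_zero hx
  have hb := tendsto_dist_succ_zero hy
  have hbound : Tendsto (fun n => dist (ys n) (ys (n + 1)) *
      (2 + dist (xs n) (xs (n + 1)) + dist (ys n) (ys (n + 1))) / 2) atTop (𝓝 0) := by
    simpa using (hb.mul ((tendsto_const_nhds (x := (2 : ℝ))).add ha |>.add hb)).div_const 2
  refine squeeze_zero (fun n => Mexpr_nonneg ..) (fun n => ?_) hbound
  simpa only [hxs n, hys n] using Mexpr_le F (ys n) (xs n) (xs n) (ys n)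

theorem dist_coupled_iterate_succ_le [PartialOrder X] {α β : ℝ}
    (hcontr : ∀ x y u v : X, u ≤ x → y ≤ v →
      dist (F x y) (F u v) ≤ α * Mexpr F x y u v + β / 2 * (dist x u + dist y v))
    (hxs : ∀ n, xs (n + 1) = F (xs n) (ys n)) (hys : ∀ n, ys (n + 1) = F (ys n) (xs n))
    {n : ℕ} (hle : xs n ≤ ys n) :
    dist (xs (n + 1)) (ys (n + 1)) ≤
      α * Mexpr F (ys n) (xs n) (xs n) (ys n) + β * dist (xs n) (ys n) := by
  have h := hcontr (ys n) (xs n) (xs n) (ys n) hle hle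
  rw [← hxs n, ← hys n, dist_comm (ys (n + 1)), dist_comm (ys n)] at h
  linarith

theorem eq_of_tendsto_coupled_iterate_of_le [PartialOrder X] (hF : MixedMonotone F)
    {α β : ℝ} (hα : 0 < α) (hαβ : α + β < 1)
    (hcontr : ∀ x y u v : X, u ≤ x → y ≤ v →
      dist (F x y) (F u v) ≤ α * Mexpr F x y u v + β / 2 * (dist x u + dist y v))
    (hxs : ∀ n, xs (n + 1) = F (xs n) (ys n)) (hys : ∀ n, ys (n + 1) = F (ys n) (xs n))
    {x y : X} (hx : Tendsto xs atTop (𝓝 x)) (hy : Tendsto ys atTop (𝓝 y))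
    (h₀ : xs 0 ≤ ys 0) : x = y := by
  have hstep n := dist_coupled_iterate_succ_le hcontr hxs hys (hF.coupled_iterate_le hxs hys h₀ n)
  have hlhs := (hx.comp (tendsto_add_atTop_nat 1)).dist (hy.comp (tendsto_add_atTop_nat 1))
  have hrhs := ((tendsto_Mexpr_coupled_iterate_zero hxs hys hx hy).const_mul α).add
    ((hx.dist hy).const_mul β)
  have hlim : dist x y ≤ α * 0 + β * dist x y := le_of_tendsto_of_tendsto' hlhs hrhs hstep
  exact dist_le_zero.1 (by nlinarith [dist_nonneg (x := x) (y := y)])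

end CoupledIterates

theorem coupled_fixed_point_eq_components_general
    {X : Type*} [MetricSpace X] [PartialOrder X]
    (F : X → X → X)
    (hmm : MixedMonotone F) (α β : ℝ) (hα : 0 < α) (hαβ : α + β < 1)
    (hcontr : ∀ x y u v : X, u ≤ x → y ≤ v →
      dist (F x y) (F u v) ≤ α * Mexpr F x y u v + β / 2 * (dist x u + dist y v))
    (xs ys : ℕ → X)
    (hxs : ∀ n, xs (n + 1) = F (xs n) (ys n)) (hys : ∀ n, ys (n + 1) = F (ys n) (xs n))
    (x y : X) (hxlim : Tendsto xs atTop (𝓝 x)) (hylim : Tendsto ys atTop (𝓝 y))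
    (hcomp : xs 0 ≤ ys 0 ∨ ys 0 ≤ xs 0) :
    x = y := by
  rcases hcomp with h | h
  · exact eq_of_tendsto_coupled_iterate_of_le hmm hα hαβ hcontr hxs hys hxlim hylim h
  · exact (eq_of_tendsto_coupled_iterate_of_le hmm hα hαβ hcontr hys hxs hylim hxlim h).symm

theorem coupled_fixed_point_eq_components
    {X : Type*} [MetricSpace X] [PartialOrder X] [CompleteSpace X]
    (F : X → X → X) (hFc : Continuous fun p : X × X => F p.1 p.2)
    (hmm : MixedMonotone F) (α β : ℝ) (hα : 0 < α) (hβ : 0 < β) (hαβ : α + β < 1)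
    (hcontr : ∀ x y u v : X, u ≤ x → y ≤ v →
      dist (F x y) (F u v) ≤ α * Mexpr F x y u v + β / 2 * (dist x u + dist y v))
    (xs ys : ℕ → X) (hx₀ : xs 0 ≤ F (xs 0) (ys 0)) (hy₀ : F (ys 0) (xs 0) ≤ ys 0)
    (hxs : ∀ n, xs (n + 1) = F (xs n) (ys n)) (hys : ∀ n, ys (n + 1) = F (ys n) (xs n))
    (x y : X) (hxlim : Tendsto xs atTop (𝓝 x)) (hylim : Tendsto ys atTop (𝓝 y))
    (hfx : F x y = x) (hfy : F y x = y)
    (hcomp : xs 0 ≤ ys 0 ∨ ys 0 ≤ xs 0) :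
    x = y :=
  coupled_fixed_point_eq_components_general F hmm α β hα hαβ hcontr xs ys hxs hys x y hxlim hylim
    hcomp
end

section
/- Let (X,d,≤) be a complete partially ordered metric space and F: X×X → X have the mixed monotone property and satisfy the rational contraction condition with α,β>0, α+β<1. If x₀ ≤ F(x₀,y₀) and y₀ ≥ F(y₀,x₀), then the iterate sequences xₙ = Fⁿ(x₀,y₀) and yₙ = Fⁿ(y₀,x₀) (where x_{n+1}=F(xₙ,yₙ), y_{n+1}=F(yₙ,xₙ)) are Cauchy sequences in X. -/
open Filter Topology

/-!
Along the iteration the pairs `(xₙ, yₙ)` are comparable in the order the contraction needs,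
since `xₙ` increases and `yₙ` decreases. For consecutive pairs the rational term `M` collapses:
one factor of its numerator coincides with its denominator, so `α · M` is at most the next
step length. Adding the contraction inequalities for the `x`- and `y`-steps, the total step
`δₙ = d(xₙ, xₙ₊₁) + d(yₙ, yₙ₊₁)` satisfies `(1 - α) δₙ₊₁ ≤ β δₙ`, so it decays geometrically
with ratio `β / (1 - α) < 1`.
-/

theorem MixedMonotone.monotone_antitone_of_iterate {X : Type*} [PartialOrder X]
    {F : X → X → X} (hF : MixedMonotone F) {xs ys : ℕ → X}
    (hx₀ : xs 0 ≤ F (xs 0) (ys 0)) (hy₀ : F (ys 0) (xs 0) ≤ ys 0)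
    (hxs : ∀ n, xs (n + 1) = F (xs n) (ys n)) (hys : ∀ n, ys (n + 1) = F (ys n) (xs n)) :
    Monotone xs ∧ Antitone ys := by
  have hstep : ∀ n, xs n ≤ xs (n + 1) ∧ ys (n + 1) ≤ ys n := by
    intro n
    induction n with
    | zero => exact ⟨(hxs 0).symm ▸ hx₀, (hys 0).symm ▸ hy₀⟩
    | succ n ih =>
      constructor
      · calc xs (n + 1) = F (xs n) (ys n) := hxs n
          _ ≤ F (xs n) (ys (n + 1)) := hF.2 _ ih.2
          _ ≤ F (xs (n + 1)) (ys (n + 1)) := hF.1 _ ih.1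
          _ = xs (n + 2) := (hxs (n + 1)).symm
      · calc ys (n + 2) = F (ys (n + 1)) (xs (n + 1)) := hys (n + 1)
          _ ≤ F (ys (n + 1)) (xs n) := hF.2 _ ih.1
          _ ≤ F (ys n) (xs n) := hF.1 _ ih.2
          _ = ys (n + 1) := (hys n).symm
  exact ⟨monotone_nat_of_le_succ fun n => (hstep n).1,
    antitone_nat_of_succ_le fun n => (hstep n).2⟩

section Mexpr

variable {X : Type*} [MetricSpace X] {F : X → X → X} {x y u v : X}

theorem Mexpr_le_dist_left_of_eq (hx : x = F u v) (hy : y = F v u) :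
    Mexpr F x y u v ≤ dist x (F x y) := by
  refine (min_le_left _ _).trans (le_of_eq ?_)
  rw [← hx, ← hy, dist_comm u x, dist_comm v y, mul_div_assoc, div_self (by positivity),
    mul_one]

theorem Mexpr_le_dist_right_of_eq (hu : u = F x y) (hv : v = F y x) :
    Mexpr F x y u v ≤ dist u (F u v) := by
  refine (min_le_right _ _).trans (le_of_eq ?_)
  rw [← hu, ← hv, mul_div_assoc, div_self (by positivity), mul_one]

end Mexpr

theorem one_sub_mul_dist_map_add_le {X : Type*} [MetricSpace X] [PartialOrder X]
    {F : X → X → X} {α β : ℝ} (hα : 0 ≤ α)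
    (hcontr : ∀ x y u v : X, u ≤ x → y ≤ v →
      dist (F x y) (F u v) ≤ α * Mexpr F x y u v + β / 2 * (dist x u + dist y v))
    {x y u v : X} (hux : u ≤ x) (hyv : y ≤ v) (hx : x = F u v) (hy : y = F v u) :
    (1 - α) * (dist x (F x y) + dist y (F y x)) ≤ β * (dist u x + dist v y) := by
  have hstep_x := hcontr x y u v hux hyv
  have hstep_y := hcontr v u y x hyv hux
  rw [← hx, dist_comm] at hstep_x
  rw [← hy] at hstep_y
  have hM_x := mul_le_mul_of_nonneg_left (Mexpr_le_dist_left_of_eq hx hy) hα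
  have hM_y := mul_le_mul_of_nonneg_left (Mexpr_le_dist_right_of_eq hy hx) hα
  rw [dist_comm x u, dist_comm y v] at hstep_x
  linarith

theorem le_mul_pow_of_le_mul_succ {R : Type*} [CommSemiring R] [PartialOrder R]
    [IsOrderedRing R] {δ : ℕ → R} {k : R} (hk : 0 ≤ k) (h : ∀ n, δ (n + 1) ≤ k * δ n) (n : ℕ) :
    δ n ≤ δ 0 * k ^ n := by
  induction n with
  | zero => simp
  | succ n ih =>
    calc δ (n + 1) ≤ k * δ n := h n
      _ ≤ k * (δ 0 * k ^ n) := by gcongr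
      _ = δ 0 * k ^ (n + 1) := by ring

theorem iterates_cauchy_general
    {X : Type*} [MetricSpace X] [PartialOrder X]
    (F : X → X → X) (hmm : MixedMonotone F)
    (α β : ℝ) (hα : 0 < α) (hβ : 0 < β) (hαβ : α + β < 1)
    (hcontr : ∀ x y u v : X, u ≤ x → y ≤ v →
      dist (F x y) (F u v) ≤ α * Mexpr F x y u v + β / 2 * (dist x u + dist y v))
    (xs ys : ℕ → X) (hx₀ : xs 0 ≤ F (xs 0) (ys 0)) (hy₀ : F (ys 0) (xs 0) ≤ ys 0)
    (hxs : ∀ n, xs (n + 1) = F (xs n) (ys n)) (hys : ∀ n, ys (n + 1) = F (ys n) (xs n)) :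
    CauchySeq xs ∧ CauchySeq ys := by
  obtain ⟨hxs_mono, hys_anti⟩ := hmm.monotone_antitone_of_iterate hx₀ hy₀ hxs hys
  set δ : ℕ → ℝ := fun n => dist (xs n) (xs (n + 1)) + dist (ys n) (ys (n + 1))
  have h1α : 0 < 1 - α := by linarith
  have hδ : ∀ n, δ (n + 1) ≤ β / (1 - α) * δ n := by
    intro n
    have h := one_sub_mul_dist_map_add_le hα.le hcontr (hxs_mono n.le_succ)
      (hys_anti n.le_succ) (hxs n) (hys n)
    rw [← hxs (n + 1), ← hys (n + 1)] at h
    rw [div_mul_eq_mul_div, le_div_iff₀ h1α, mul_comm]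
    exact h
  have hpairs : CauchySeq fun n => (xs n, ys n) := by
    refine cauchySeq_of_le_geometric (β / (1 - α)) (δ 0) ((div_lt_one h1α).2 (by linarith))
      fun n => ?_
    rw [Prod.dist_eq]
    exact (max_le_add_of_nonneg dist_nonneg dist_nonneg).trans
      (le_mul_pow_of_le_mul_succ (div_nonneg hβ.le h1α.le) hδ n)
  exact ⟨uniformContinuous_fst.comp_cauchySeq hpairs, uniformContinuous_snd.comp_cauchySeq hpairs⟩

theorem iterates_cauchy
    {X : Type*} [MetricSpace X] [PartialOrder X] [CompleteSpace X]
    (F : X → X → X) (hmm : MixedMonotone F)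
    (α β : ℝ) (hα : 0 < α) (hβ : 0 < β) (hαβ : α + β < 1)
    (hcontr : ∀ x y u v : X, u ≤ x → y ≤ v →
      dist (F x y) (F u v) ≤ α * Mexpr F x y u v + β / 2 * (dist x u + dist y v))
    (xs ys : ℕ → X) (hx₀ : xs 0 ≤ F (xs 0) (ys 0)) (hy₀ : F (ys 0) (xs 0) ≤ ys 0)
    (hxs : ∀ n, xs (n + 1) = F (xs n) (ys n)) (hys : ∀ n, ys (n + 1) = F (ys n) (xs n)) :
    CauchySeq xs ∧ CauchySeq ys :=
  iterates_cauchy_general F hmm α β hα hβ hαβ hcontr xs ys hx₀ hy₀ hxs hys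
end

section
/- Let (X,d,≤) be a partially ordered metric space and F: X×X → X satisfy d(F(x,y),F(u,v)) ≤ α·M((x,y),(u,v)) + (β/2)[d(x,u)+d(y,v)] for all x ≥ u, y ≤ v, with α,β>0, α+β<1. Suppose (x,y) and (x*,y*) are coupled fixed points of F that are comparable in the product order ((u,v) ≤ (x,y) iff u ≤ x, v ≥ y). Then d(x,x*) + d(y,y*) ≤ β·[d(x,x*) + d(y,y*)], and hence (x,y) = (x*,y*). -/
open Filter Topology

/-!
At coupled fixed points the rational term `M` vanishes, so the contraction condition, applied
once to the pairs themselves and once to the swapped pairs, leaves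
`d(x,x') + d(y,y') ≤ β (d(x,x') + d(y,y'))`; since `β < 1` the sum is zero.
-/

section

variable {X : Type*} [MetricSpace X]

lemma Mexpr_eq_zero_of_fixed (F : X → X → X) {x y u v : X} (hx : F x y = x) (hu : F u v = u) :
    Mexpr F x y u v = 0 := by
  simp [Mexpr, hx, hu]

variable [PartialOrder X] {F : X → X → X} {α β : ℝ}

lemma dist_le_of_fixed
    (hcontr : ∀ x y u v : X, u ≤ x → y ≤ v →
      dist (F x y) (F u v) ≤ α * Mexpr F x y u v + β / 2 * (dist x u + dist y v))
    {x y u v : X} (hx : F x y = x) (hu : F u v = u) (hux : u ≤ x) (hyv : y ≤ v) :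
    dist x u ≤ β / 2 * (dist x u + dist y v) := by
  simpa [hx, hu, Mexpr_eq_zero_of_fixed F hx hu] using hcontr x y u v hux hyv

lemma dist_add_dist_le_mul_of_coupled_fixed
    (hcontr : ∀ x y u v : X, u ≤ x → y ≤ v →
      dist (F x y) (F u v) ≤ α * Mexpr F x y u v + β / 2 * (dist x u + dist y v))
    {x y x' y' : X} (hxy : F x y = x ∧ F y x = y) (hxy' : F x' y' = x' ∧ F y' x' = y')
    (hx : x' ≤ x) (hy : y ≤ y') :
    dist x x' + dist y y' ≤ β * (dist x x' + dist y y') := by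
  have h₁ := dist_le_of_fixed hcontr hxy.1 hxy'.1 hx hy
  have h₂ := dist_le_of_fixed hcontr hxy'.2 hxy.2 hy hx
  rw [dist_comm y', dist_comm x'] at h₂
  linarith

end

lemma eq_zero_of_le_mul_of_lt_one {s β : ℝ} (hs : 0 ≤ s) (hβ : β < 1) (h : s ≤ β * s) :
    s = 0 := by
  nlinarith

theorem comparable_coupled_fixed_points_eq_general
    {X : Type*} [MetricSpace X] [PartialOrder X]
    (F : X → X → X) (α β : ℝ) (hα : 0 < α) (hαβ : α + β < 1)
    (hcontr : ∀ x y u v : X, u ≤ x → y ≤ v →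
      dist (F x y) (F u v) ≤ α * Mexpr F x y u v + β / 2 * (dist x u + dist y v))
    (x y x' y' : X) (hxy : F x y = x ∧ F y x = y) (hxy' : F x' y' = x' ∧ F y' x' = y')
    (hcomp : (x' ≤ x ∧ y ≤ y') ∨ (x ≤ x' ∧ y' ≤ y)) :
    dist x x' + dist y y' ≤ β * (dist x x' + dist y y') ∧ x = x' ∧ y = y' := by
  have key : dist x x' + dist y y' ≤ β * (dist x x' + dist y y') := by
    rcases hcomp with ⟨hx, hy⟩ | ⟨hx, hy⟩
    · exact dist_add_dist_le_mul_of_coupled_fixed hcontr hxy hxy' hx hy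
    · simpa only [dist_comm] using dist_add_dist_le_mul_of_coupled_fixed hcontr hxy' hxy hx hy
  have hβ : β < 1 := by linarith
  have hsum := eq_zero_of_le_mul_of_lt_one (by positivity) hβ key
  rw [add_eq_zero_iff_of_nonneg dist_nonneg dist_nonneg, dist_eq_zero, dist_eq_zero] at hsum
  exact ⟨key, hsum⟩

theorem comparable_coupled_fixed_points_eq
    {X : Type*} [MetricSpace X] [PartialOrder X]
    (F : X → X → X) (α β : ℝ) (hα : 0 < α) (hβ : 0 < β) (hαβ : α + β < 1)
    (hcontr : ∀ x y u v : X, u ≤ x → y ≤ v →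
      dist (F x y) (F u v) ≤ α * Mexpr F x y u v + β / 2 * (dist x u + dist y v))
    (x y x' y' : X) (hxy : F x y = x ∧ F y x = y) (hxy' : F x' y' = x' ∧ F y' x' = y')
    (hcomp : (x' ≤ x ∧ y ≤ y') ∨ (x ≤ x' ∧ y' ≤ y)) :
    dist x x' + dist y y' ≤ β * (dist x x' + dist y y') ∧ x = x' ∧ y = y' :=
  comparable_coupled_fixed_points_eq_general F α β hα hαβ hcontr x y x' y' hxy hxy' hcomp
end
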